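/- Let a, b ∈ ℂ. Define ℂ-linear endomorphisms L_i, H_i, G_i⁺, G_i⁻ (i ∈ ℤ) of V by their values on the basis: L_i x_j = (a − j + i·b)·x_{i+j}, L_i y_j = (a − j + i·(b + 1/2))·y_{i+j}, H_i x_j = −(2b + 2)·x_{i+j}, H_i y_j = −(2b + 1)·y_{i+j}, G_i⁻ x_j = 0, G_i⁺ y_j = 0, G_i⁺ x_j = y_{i+j}, G_i⁻ y_j = 2(a + i − j + 2i·b)·x_{i+j}. Then these operators satisfy the Ramond N=2 relations with zero central charge. -/

import Mathlib

noncomputable section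

/-- The underlying space of the intermediate-series modules: two copies of `ℤ →₀ ℂ`. -/
abbrev V : Type := (ℤ →₀ ℂ) × (ℤ →₀ ℂ)

/-- The basis vectors `x j`. -/
def x (j : ℤ) : V := (Finsupp.single j 1, 0)

/-- The basis vectors `y j`. -/
def y (j : ℤ) : V := (0, Finsupp.single j 1)

/-- Commutator of endomorphisms. -/
def bracket (P Q : V →ₗ[ℂ] V) : V →ₗ[ℂ] V := P ∘ₗ Q - Q ∘ₗ P

/-- Anticommutator of endomorphisms. -/
def abracket (P Q : V →ₗ[ℂ] V) : V →ₗ[ℂ] V := P ∘ₗ Q + Q ∘ₗ P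

/-- The relations of the Ramond N=2 superconformal algebra with zero central charge. -/
def RamondRel (L H Gp Gm : ℤ → (V →ₗ[ℂ] V)) : Prop :=
  (∀ i j : ℤ, bracket (L i) (L j) = ((i : ℂ) - (j : ℂ)) • L (i + j)) ∧
  (∀ i j : ℤ, bracket (L i) (H j) = (-(j : ℂ)) • H (i + j)) ∧
  (∀ i j : ℤ, bracket (H i) (H j) = 0) ∧
  (∀ i j : ℤ, bracket (L i) (Gp j) = ((i : ℂ) / 2 - (j : ℂ)) • Gp (i + j)) ∧
  (∀ i j : ℤ, bracket (L i) (Gm j) = ((i : ℂ) / 2 - (j : ℂ)) • Gm (i + j)) ∧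
  (∀ i j : ℤ, bracket (H i) (Gp j) = Gp (i + j)) ∧
  (∀ i j : ℤ, bracket (H i) (Gm j) = - Gm (i + j)) ∧
  (∀ i j : ℤ, abracket (Gp i) (Gp j) = 0) ∧
  (∀ i j : ℤ, abracket (Gm i) (Gm j) = 0) ∧
  (∀ i j : ℤ, abracket (Gm i) (Gp j) = (2 : ℂ) • L (i + j) - ((i : ℂ) - (j : ℂ)) • H (i + j))

/-!
Both sides of each relation are linear, so it suffices to compare them on the basis vectors
`x k`, `y k`. There every operator shifts the index and rescales, so each side is a multiple of
the same basis vector, and the relation becomes a polynomial identity in `a, b, i, j, k`.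
-/

theorem linearMap_ext_xy {M : Type*} [AddCommMonoid M] [Module ℂ M] {P Q : V →ₗ[ℂ] M}
    (hx : ∀ j, P (x j) = Q (x j)) (hy : ∀ j, P (y j) = Q (y j)) : P = Q :=
  LinearMap.prod_ext (Finsupp.lhom_ext' fun j => LinearMap.ext_ring (hx j))
    (Finsupp.lhom_ext' fun j => LinearMap.ext_ring (hy j))

theorem bracket_apply (P Q : V →ₗ[ℂ] V) (v : V) : bracket P Q v = P (Q v) - Q (P v) := rfl

theorem abracket_apply (P Q : V →ₗ[ℂ] V) (v : V) : abracket P Q v = P (Q v) + Q (P v) := rfl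

theorem stmt_12 (a b : ℂ) (L H Gp Gm : ℤ → (V →ₗ[ℂ] V))
    (hLx : ∀ i j : ℤ, L i (x j) = (a - (j : ℂ) + (i : ℂ) * b) • x (i + j))
    (hLy : ∀ i j : ℤ, L i (y j) = (a - (j : ℂ) + (i : ℂ) * (b + 1/2)) • y (i + j))
    (hHx : ∀ i j : ℤ, H i (x j) = (-(2 * b + 2)) • x (i + j))
    (hHy : ∀ i j : ℤ, H i (y j) = (-(2 * b + 1)) • y (i + j))
    (hGmx : ∀ i j : ℤ, Gm i (x j) = 0)
    (hGpy : ∀ i j : ℤ, Gp i (y j) = 0)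
    (hGpx : ∀ i j : ℤ, Gp i (x j) = y (i + j))
    (hGmy : ∀ i j : ℤ, Gm i (y j) = (2 * (a + (i : ℂ) - (j : ℂ) + 2 * (i : ℂ) * b)) • x (i + j)) :
    RamondRel L H Gp Gm := by
  refine ⟨?_, ?_, ?_, ?_, ?_, ?_, ?_, ?_, ?_, ?_⟩ <;> intro i j <;>
    refine linearMap_ext_xy (fun k => ?_) (fun k => ?_) <;>
    simp only [bracket_apply, abracket_apply, LinearMap.sub_apply, LinearMap.smul_apply,
      LinearMap.neg_apply, LinearMap.zero_apply, map_smul, map_zero, smul_zero,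
      hLx, hLy, hHx, hHy, hGmx, hGpy, hGpx, hGmy, Int.cast_add, add_comm, add_left_comm] <;>
    module
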